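/- Let m be a positive half-odd integer (2m an odd positive integer). Then for all τ in the upper half-plane and z1, z2 ∈ ℂ (with all denominators nonzero): Φ^{[m,0]}(τ, z1, z2, 0) = e^{2πimz1} Φ^{[m,1/2]}(τ, z1, z2+τ, 0) + Σ_{k=1}^{m−1/2} e^{πik(z1−z2)} q^{−k²/(4m)} [θ_{k,m} − θ_{−k,m}](τ, z1+z2), where k runs over the integers 1, …, m−1/2. -/

import Mathlib

open Complex

noncomputable section

namespace Wakimoto

/-- `qpow τ x = e^{2πiτx}`, i.e. `q^x` where `q = e^{2πiτ}`. -/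
def qpow (τ x : ℂ) : ℂ := Complex.exp (2 * Real.pi * Complex.I * τ * x)

/-- `e2 z = e^{2πiz}`. -/
def e2 (z : ℂ) : ℂ := Complex.exp (2 * Real.pi * Complex.I * z)

/-- The mock theta function `Φ^{[m,s]}_1`. -/
def Phi1 (m s : ℂ) (τ z1 z2 t : ℂ) : ℂ :=
  Complex.exp (-(2 * Real.pi * Complex.I) * m * t) *
    ∑' j : ℤ,
      Complex.exp (2 * Real.pi * Complex.I * (m * (j : ℂ) * (z1 + z2) + s * z1)) *
          qpow τ (m * (j : ℂ) ^ 2 + s * (j : ℂ)) /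
        (1 - e2 z1 * qpow τ (j : ℂ))

/-- The mock theta function `Φ^{[m,s]}_2`. -/
def Phi2 (m s : ℂ) (τ z1 z2 t : ℂ) : ℂ :=
  Complex.exp (-(2 * Real.pi * Complex.I) * m * t) *
    ∑' j : ℤ,
      Complex.exp (-(2 * Real.pi * Complex.I) * (m * (j : ℂ) * (z1 + z2) + s * z2)) *
          qpow τ (m * (j : ℂ) ^ 2 + s * (j : ℂ)) /
        (1 - e2 (-z2) * qpow τ (j : ℂ))

/-- `Φ^{[m,s]} = Φ^{[m,s]}_1 - Φ^{[m,s]}_2`. -/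
def Phi (m s : ℂ) (τ z1 z2 t : ℂ) : ℂ :=
  Phi1 m s τ z1 z2 t - Phi2 m s τ z1 z2 t

/-- Jacobi's theta function `θ_{k,m}`. -/
def jTheta (k m : ℂ) (τ z : ℂ) : ℂ :=
  ∑' j : ℤ,
    Complex.exp (2 * Real.pi * Complex.I * (m * ((j : ℂ) + k / (2 * m)) * z)) *
      qpow τ (m * ((j : ℂ) + k / (2 * m)) ^ 2)

/-- The signed theta function `θ^{(-)}_{k,m}`. -/
def jThetaM (k m : ℂ) (τ z : ℂ) : ℂ :=
  ∑' j : ℤ,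
    (-1 : ℂ) ^ j *
      Complex.exp (2 * Real.pi * Complex.I * (m * ((j : ℂ) + k / (2 * m)) * z)) *
      qpow τ (m * ((j : ℂ) + k / (2 * m)) ^ 2)

/-- The Dedekind eta function. -/
def eta (τ : ℂ) : ℂ := qpow τ (1 / 24) * ∏' n : ℕ, (1 - qpow τ ((n : ℂ) + 1))

/-- The Mumford theta functions `ϑ_{ab}`. -/
def mumford (a b : ℕ) (τ z : ℂ) : ℂ :=
  ∑' n : ℤ,
    Complex.exp (Real.pi * Complex.I * τ * ((n : ℂ) + (a : ℂ) / 2) ^ 2 +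
      2 * Real.pi * Complex.I * ((n : ℂ) + (a : ℂ) / 2) * (z + (b : ℂ) / 2))

/-- `z` lies in the lattice `ℤ + ℤτ`. -/
def InLattice (τ z : ℂ) : Prop := ∃ a b : ℤ, z = (a : ℂ) + (b : ℂ) * τ

/-! Put `x_j = e^{2πiz₁}q^j` in `Φ₁^{[m,0]}` and `x_j = e^{-2πiz₂}q^j` in `Φ₂^{[m,0]}`, and let
`N = m + 1/2 ∈ ℕ`. Expanding `1/(1 - x) = x^N/(1 - x) + ∑_{k<N} x^k` termwise, the remainders are
`e^{2πimz₁}Φ^{[m,1/2]}_i(τ,z₁,z₂+τ,0)` (for `Φ₂` after the shift `j ↦ j+1`), and the `k`-th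
geometric terms are `e^{πik(z₁-z₂)}q^{-k²/4m}θ_{±k,m}(τ,z₁+z₂)`. The `k = 0` terms are both
`θ_{0,m}` and cancel. Everything converges absolutely because `|1 - x_j| ≥ 1/2` for all but
finitely many `j`. -/

open Filter Topology

def gaussTerm (m τ w : ℂ) (j : ℤ) : ℂ := e2 (m * j * w) * qpow τ (m * j ^ 2)

def appellLerch (m τ w z : ℂ) (N : ℕ) : ℂ :=
  ∑' j : ℤ, gaussTerm m τ w j * (e2 z * qpow τ j) ^ N / (1 - e2 z * qpow τ j)

def shiftedTheta (m τ w z : ℂ) (k : ℕ) : ℂ :=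
  ∑' j : ℤ, gaussTerm m τ w j * (e2 z * qpow τ j) ^ k

lemma gaussTerm_mul_pow_eq (m τ w z : ℂ) (k : ℕ) (j : ℤ) :
    gaussTerm m τ w j * (e2 z * qpow τ j) ^ k =
      e2 (k * z) * jacobiTheta₂_term j (m * w + k * τ) (2 * m * τ) := by
  simp only [gaussTerm, e2, qpow, jacobiTheta₂_term, ← exp_add, ← exp_nat_mul]
  congr 1
  ring

lemma norm_qpow_intCast (τ : ℂ) (j : ℤ) :
    ‖qpow τ j‖ = Real.exp (-(2 * Real.pi * τ.im) * j) := by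
  rw [qpow, norm_exp]
  congr 1
  simp [mul_re, mul_im]

section Summability

variable {m τ : ℂ}

lemma summable_gaussTerm_mul_pow (hmτ : 0 < (m * τ).im) (w z : ℂ) (k : ℕ) :
    Summable fun j : ℤ => gaussTerm m τ w j * (e2 z * qpow τ j) ^ k := by
  simp_rw [gaussTerm_mul_pow_eq]
  refine ((summable_jacobiTheta₂_term_iff _ _).2 ?_).mul_left _
  rw [mul_assoc]
  simpa using hmτ

lemma tendsto_norm_e2_mul_qpow_atTop (hτ : 0 < τ.im) (z : ℂ) :
    Tendsto (fun j : ℤ => ‖e2 z * qpow τ j‖) atTop (𝓝 0) := by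
  have ht : -(2 * Real.pi * τ.im) < 0 := by have := Real.pi_pos; nlinarith
  simp_rw [norm_mul, norm_qpow_intCast]
  simpa using (Real.tendsto_exp_atBot.comp
    (tendsto_intCast_atTop_atTop.const_mul_atTop_of_neg ht)).const_mul ‖e2 z‖

lemma tendsto_norm_e2_mul_qpow_atBot (hτ : 0 < τ.im) (z : ℂ) :
    Tendsto (fun j : ℤ => ‖e2 z * qpow τ j‖) atBot atTop := by
  have ht : -(2 * Real.pi * τ.im) < 0 := by have := Real.pi_pos; nlinarith
  simp_rw [norm_mul, norm_qpow_intCast]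
  exact (Real.tendsto_exp_atTop.comp
    ((tendsto_intCast_atBot_iff.2 tendsto_id).const_mul_atBot_of_neg ht)).const_mul_atTop
    (norm_pos_iff.2 (exp_ne_zero _))

lemma eventually_half_le_norm_one_sub_e2_mul_qpow (hτ : 0 < τ.im) (z : ℂ) :
    ∀ᶠ j : ℤ in cofinite, 1 / 2 ≤ ‖1 - e2 z * qpow τ j‖ := by
  rw [Int.cofinite_eq, eventually_sup]
  constructor
  · filter_upwards [(tendsto_norm_e2_mul_qpow_atBot hτ z).eventually_ge_atTop (3 / 2)] with j hj
    have := norm_sub_norm_le (e2 z * qpow τ j) 1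
    rw [norm_sub_rev, norm_one] at this
    linarith
  · filter_upwards [(tendsto_norm_e2_mul_qpow_atTop hτ z).eventually_le_const
      (by norm_num : (0 : ℝ) < 1 / 2)] with j hj
    have := norm_sub_norm_le (1 : ℂ) (e2 z * qpow τ j)
    rw [norm_one] at this
    linarith

lemma summable_appellLerch_term (hτ : 0 < τ.im) (hmτ : 0 < (m * τ).im) (w z : ℂ) (N : ℕ) :
    Summable fun j : ℤ =>
      gaussTerm m τ w j * (e2 z * qpow τ j) ^ N / (1 - e2 z * qpow τ j) := by
  refine .of_norm_bounded_eventually ((summable_gaussTerm_mul_pow hmτ w z N).norm.mul_left 2) ?_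
  filter_upwards [eventually_half_le_norm_one_sub_e2_mul_qpow hτ z] with j hj
  rw [norm_div, div_le_iff₀ (by linarith)]
  nlinarith [norm_nonneg (gaussTerm m τ w j * (e2 z * qpow τ j) ^ N)]

end Summability

lemma one_sub_e2_mul_qpow_ne_zero {τ z : ℂ} (hz : ¬ InLattice τ z) (j : ℤ) :
    1 - e2 z * qpow τ j ≠ 0 := by
  intro h
  have h1 : e2 z * qpow τ j = 1 := by linear_combination -h
  rw [e2, qpow, ← exp_add, exp_eq_one_iff] at h1
  obtain ⟨k, hk⟩ := h1
  refine hz ⟨k, -j, mul_left_cancel₀ Complex.two_pi_I_ne_zero ?_⟩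
  push_cast
  linear_combination hk

lemma div_one_sub_eq_add_geom_sum {x : ℂ} (hx : 1 - x ≠ 0) (a : ℂ) (N : ℕ) :
    a / (1 - x) = a * x ^ N / (1 - x) + ∑ k ∈ Finset.range N, a * x ^ k := by
  rw [← Finset.mul_sum]
  field_simp
  linear_combination a * geom_sum_mul x N

lemma appellLerch_zero_eq {m τ z : ℂ} (hτ : 0 < τ.im) (hmτ : 0 < (m * τ).im)
    (hz : ¬ InLattice τ z) (w : ℂ) (N : ℕ) :
    appellLerch m τ w z 0 =
      appellLerch m τ w z N + ∑ k ∈ Finset.range N, shiftedTheta m τ w z k := by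
  simp only [appellLerch, shiftedTheta]
  rw [← Summable.tsum_finsetSum fun k _ => summable_gaussTerm_mul_pow hmτ w z k,
    ← (summable_appellLerch_term hτ hmτ w z N).tsum_add
      (summable_sum fun k _ => summable_gaussTerm_mul_pow hmτ w z k)]
  refine tsum_congr fun j => ?_
  rw [pow_zero, mul_one]
  exact div_one_sub_eq_add_geom_sum (one_sub_e2_mul_qpow_ne_zero hz j) _ N

lemma jTheta_neg (k m τ w : ℂ) : jTheta k m τ (-w) = jTheta (-k) m τ w := by
  rw [jTheta, jTheta, ← (Equiv.neg ℤ).tsum_eq]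
  refine tsum_congr fun j => ?_
  simp only [Equiv.neg_apply, Int.cast_neg]
  ring_nf

lemma shiftedTheta_eq {m : ℂ} (hm : m ≠ 0) (τ w z : ℂ) (k : ℕ) :
    shiftedTheta m τ w z k =
      e2 (k * (z - w / 2)) * qpow τ (-(k ^ 2) / (4 * m)) * jTheta k m τ w := by
  rw [jTheta, ← tsum_mul_left]
  refine tsum_congr fun j => ?_
  simp only [gaussTerm, e2, qpow, ← exp_add, ← exp_nat_mul]
  congr 1
  field_simp
  ring

lemma shiftedTheta_sub_shiftedTheta {m : ℂ} (hm : m ≠ 0) (τ z1 z2 : ℂ) (k : ℕ) :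
    shiftedTheta m τ (z1 + z2) z1 k - shiftedTheta m τ (-(z1 + z2)) (-z2) k =
      Complex.exp (Real.pi * I * k * (z1 - z2)) * qpow τ (-(k ^ 2) / (4 * m)) *
        (jTheta k m τ (z1 + z2) - jTheta (-k) m τ (z1 + z2)) := by
  rw [shiftedTheta_eq hm, shiftedTheta_eq hm, jTheta_neg,
    show e2 (k * (z1 - (z1 + z2) / 2)) = Complex.exp (Real.pi * I * k * (z1 - z2)) by
      rw [e2]; ring_nf,
    show e2 (k * (-z2 - -(z1 + z2) / 2)) = Complex.exp (Real.pi * I * k * (z1 - z2)) by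
      rw [e2]; ring_nf]
  ring

lemma Phi1_zero_eq_appellLerch (m τ z1 z2 : ℂ) :
    Phi1 m 0 τ z1 z2 0 = appellLerch m τ (z1 + z2) z1 0 := by
  rw [Phi1, mul_zero, exp_zero, one_mul]
  refine tsum_congr fun j => ?_
  simp only [gaussTerm, e2, qpow, ← exp_add, pow_zero, mul_one]
  ring_nf

lemma Phi2_zero_eq_appellLerch (m τ z1 z2 : ℂ) :
    Phi2 m 0 τ z1 z2 0 = appellLerch m τ (-(z1 + z2)) (-z2) 0 := by
  rw [Phi2, mul_zero, exp_zero, one_mul]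
  refine tsum_congr fun j => ?_
  simp only [gaussTerm, e2, qpow, ← exp_add, pow_zero, mul_one]
  ring_nf

lemma e2_mul_Phi1_half_eq_appellLerch {m : ℂ} {N : ℕ} (hN : (N : ℂ) = m + 1 / 2)
    (τ z1 z2 : ℂ) :
    e2 (m * z1) * Phi1 m (1 / 2) τ z1 (z2 + τ) 0 = appellLerch m τ (z1 + z2) z1 N := by
  rw [Phi1, mul_zero, exp_zero, one_mul, ← tsum_mul_left]
  refine tsum_congr fun j => ?_
  rw [mul_div_assoc']
  congr 1
  simp only [gaussTerm, e2, qpow, ← exp_add, ← exp_nat_mul, hN]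
  ring_nf

lemma e2_mul_Phi2_half_eq_appellLerch {m : ℂ} {N : ℕ} (hN : (N : ℂ) = m + 1 / 2)
    (τ z1 z2 : ℂ) :
    e2 (m * z1) * Phi2 m (1 / 2) τ z1 (z2 + τ) 0 = appellLerch m τ (-(z1 + z2)) (-z2) N := by
  rw [Phi2, mul_zero, exp_zero, one_mul, ← tsum_mul_left,
    ← (Equiv.addRight (1 : ℤ)).tsum_eq]
  refine tsum_congr fun j => ?_
  simp only [Equiv.coe_addRight, Int.cast_add, Int.cast_one]
  rw [mul_div_assoc']
  congr 1
  · simp only [gaussTerm, e2, qpow, ← exp_add, ← exp_nat_mul, hN]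
    ring_nf
  · simp only [e2, qpow, ← exp_add]
    ring_nf

theorem statement15 (m : ℝ) (n : ℕ) (hm : m = (2 * n + 1) / 2)
    (τ : ℂ) (hτ : 0 < τ.im) (z1 z2 : ℂ)
    (hz1 : ¬ InLattice τ z1) (hz2 : ¬ InLattice τ z2) :
    Phi (m : ℂ) 0 τ z1 z2 0 =
      e2 ((m : ℂ) * z1) * Phi (m : ℂ) (1 / 2) τ z1 (z2 + τ) 0 +
        ∑ k ∈ Finset.Icc 1 n,
          Complex.exp (Real.pi * Complex.I * (k : ℂ) * (z1 - z2)) *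
            qpow τ (-((k : ℂ) ^ 2) / (4 * (m : ℂ))) *
            (jTheta (k : ℂ) (m : ℂ) τ (z1 + z2) -
              jTheta (-(k : ℂ)) (m : ℂ) τ (z1 + z2)) := by
  have hm_pos : 0 < m := by rw [hm]; positivity
  have hmτ : 0 < ((m : ℂ) * τ).im := by simpa using mul_pos hm_pos hτ
  have hN : ((n + 1 : ℕ) : ℂ) = m + 1 / 2 := by rw [hm]; push_cast; ring
  have hz2' : ¬ InLattice τ (-z2) := fun ⟨a, b, h⟩ =>
    hz2 ⟨-a, -b, by push_cast; linear_combination -h⟩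
  have hsum : ∑ k ∈ Finset.range (n + 1),
      (shiftedTheta m τ (z1 + z2) z1 k - shiftedTheta m τ (-(z1 + z2)) (-z2) k) =
      ∑ k ∈ Finset.Icc 1 n,
        Complex.exp (Real.pi * I * k * (z1 - z2)) * qpow τ (-(k ^ 2) / (4 * m)) *
          (jTheta k m τ (z1 + z2) - jTheta (-k) m τ (z1 + z2)) := by
    rw [Finset.range_eq_Ico, Finset.sum_eq_sum_Ico_succ_bot (by omega), zero_add,
      Finset.Ico_add_one_right_eq_Icc]
    simp only [shiftedTheta_sub_shiftedTheta (ofReal_ne_zero.2 hm_pos.ne'), Nat.cast_zero,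
      neg_zero, sub_self, mul_zero, zero_add]
  rw [Phi, Phi, Phi1_zero_eq_appellLerch, Phi2_zero_eq_appellLerch,
    appellLerch_zero_eq hτ hmτ hz1 _ (n + 1), appellLerch_zero_eq hτ hmτ hz2' _ (n + 1),
    mul_sub, e2_mul_Phi1_half_eq_appellLerch hN, e2_mul_Phi2_half_eq_appellLerch hN, ← hsum,
    Finset.sum_sub_distrib]
  ring

end Wakimoto
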